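/- arXiv:math/9903002 — 2 statements merged into one kernel-verified Lean document; each statement's English description precedes it below -/
import Mathlib

section
/- Let M be a real analytic manifold, Γ a group acting on M by real analytic diffeomorphisms via ρ: Γ → Diff^ω(M), with a fixed point x₀, and let r: Γ → GL(T_{x₀}M) be the infinitesimal representation at x₀. Suppose ρ is analytically linearizable at x₀ by a local analytic diffeomorphism φ with φ(0)=x₀ and φ∘r(γ) = ρ(γ)∘φ near 0 for every γ ∈ Γ. Then there exists an open set ℳ that is maximal among the connected open subsets of T_{x₀}M containing 0 that are r-invariant and on which φ extends to an analytic local diffeomorphism Φ: ℳ → M satisfying Φ∘r(γ) = ρ(γ)∘Φ on ℳ for every γ ∈ Γ. -/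
open Set Filter Topology MeasureTheory Matrix Function
noncomputable section
namespace Zeghib

/-- `ℝⁿ` (with the sup norm; the choice of norm is irrelevant). -/
abbrev V (n : ℕ) : Type := Fin n → ℝ

section Charted

variable (E : Type*) [NormedAddCommGroup E] [NormedSpace ℝ E]
variable (E' : Type*) [NormedAddCommGroup E'] [NormedSpace ℝ E']
variable {M : Type*} [TopologicalSpace M] [ChartedSpace E M]
variable {M' : Type*} [TopologicalSpace M'] [ChartedSpace E' M']

/-- A map between charted spaces (over real normed vector spaces) is real analytic at a
point if it is continuous there and its representative in the preferred charts is
real analytic. -/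
def CAnalyticAt (f : M → M') (x : M) : Prop :=
  ContinuousAt f x ∧
    AnalyticAt ℝ ((chartAt E' (f x)) ∘ f ∘ (chartAt E x).symm) (chartAt E x x)

def CAnalyticOn (f : M → M') (s : Set M) : Prop := ∀ x ∈ s, CAnalyticAt E E' f x

def CAnalytic (f : M → M') : Prop := ∀ x, CAnalyticAt E E' f x

/-- A charted space is a real analytic manifold when all its transition maps are
real analytic. -/
def AnalyticCharts (M : Type*) [TopologicalSpace M] [ChartedSpace E M] : Prop :=
  ∀ x y : M, ∀ z ∈ ((chartAt E x).symm.trans (chartAt E y)).source,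
    AnalyticAt ℝ ((chartAt E y) ∘ (chartAt E x).symm) z

/-- `f` is, on `s`, a local analytic diffeomorphism (onto its image). -/
def LocalAnaDiffeoOn (f : M → M') (s : Set M) : Prop :=
  ∀ x ∈ s, ∃ U : Set M, IsOpen U ∧ x ∈ U ∧ U ⊆ s ∧ InjOn f U ∧ IsOpen (f '' U) ∧
    CAnalyticOn E E' f U ∧ ∃ g : M' → M, LeftInvOn g f U ∧ CAnalyticOn E' E g (f '' U)

/-- `f` restricted to `s` is a covering map onto its image. -/
def IsCoveringOntoImage (f : M → M') (s : Set M) : Prop :=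
  ∀ y ∈ f '' s, ∃ W : Set M', IsOpen W ∧ y ∈ W ∧
    ∃ (ι : Type) (U : ι → Set M), (∀ i, IsOpen (U i)) ∧
      Pairwise (Function.onFun Disjoint U) ∧ (s ∩ f ⁻¹' W = ⋃ i, U i) ∧
      ∀ i, BijOn f (U i) W

/-- An equivalence which is a real analytic diffeomorphism. -/
def IsAnaDiffeo (h : M ≃ M') : Prop := CAnalytic E E' h ∧ CAnalytic E' E h.symm

end Charted

/-- Star-shapedness with respect to the origin. -/
def StarShapedZero {n : ℕ} (s : Set (V n)) : Prop :=
  ∀ u ∈ s, ∀ t ∈ Icc (0:ℝ) 1, t • u ∈ s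

/-- `φ` extends, from a neighborhood of `0`, to an analytic local diffeomorphism
(onto its image) defined on `s`. -/
def ExtendsAsLocalAnaDiffeo {n : ℕ} {M : Type*} [TopologicalSpace M] [ChartedSpace (V n) M]
    (φ : V n → M) (s : Set (V n)) : Prop :=
  ∃ ψ : V n → M, (∀ᶠ u in 𝓝 (0 : V n), ψ u = φ u) ∧ LocalAnaDiffeoOn (V n) (V n) ψ s

/-- `(ℳ, Φ)` is an extension of the germ of the linearizing map `φ` to a connected
`r`-invariant open neighborhood `ℳ` of `0`, as an analytic local diffeomorphism
semi-conjugating the linear action `r` to the action `ρ`. -/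
def GoodExt {n : ℕ} {Γ : Type*} {M : Type*} [TopologicalSpace M] [ChartedSpace (V n) M]
    (r : Γ → V n → V n) (ρ : Γ → M → M) (φ : V n → M)
    (ℳ : Set (V n)) (Φ : V n → M) : Prop :=
  IsOpen ℳ ∧ IsConnected ℳ ∧ (0 : V n) ∈ ℳ ∧
  (∀ γ, ∀ u ∈ ℳ, r γ u ∈ ℳ) ∧
  (∀ᶠ u in 𝓝 (0 : V n), Φ u = φ u) ∧
  LocalAnaDiffeoOn (V n) (V n) Φ ℳ ∧
  (∀ γ, ∀ u ∈ ℳ, Φ (r γ u) = ρ γ (Φ u))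

/-- `φ` is an analytic diffeomorphism from an open neighborhood of `0 ∈ ℝⁿ` onto an open
neighborhood of its image, sending `0` to `x₀`. -/
def IsLocalLinearization {n : ℕ} {M : Type*} [TopologicalSpace M] [ChartedSpace (V n) M]
    (φ : V n → M) (x₀ : M) : Prop :=
  φ 0 = x₀ ∧
  ∃ U : Set (V n), IsOpen U ∧ (0 : V n) ∈ U ∧ InjOn φ U ∧ IsOpen (φ '' U) ∧
    CAnalyticOn (V n) (V n) φ U ∧
    ∃ ψ : M → V n, LeftInvOn ψ φ U ∧ CAnalyticOn (V n) (V n) ψ (φ '' U)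

/-!
The germ identity `φ ∘ r γ = ρ γ ∘ φ` at `0` propagates, by the identity theorem, to every
`w` with `w, r γ w` in a small ball `B` around `0`. Hence `u ↦ ρ(a)⁻¹ φ(r(a) u)`, for any `a`
with `r(a) u ∈ B`, is a well-defined equivariant extension of `φ` to the connected `r`-invariant
set `⋃ₐ r(a)⁻¹ B`, built locally from analytic diffeomorphisms. By the identity theorem again,
two extensions agree on the smaller of two nested domains, so extensions along a chain of
domains glue together, and Zorn's lemma gives a maximal domain.
-/

open scoped Manifold

section ChartAnalytic

variable {E E' E'' : Type*} [NormedAddCommGroup E] [NormedSpace ℝ E]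
  [NormedAddCommGroup E'] [NormedSpace ℝ E'] [NormedAddCommGroup E''] [NormedSpace ℝ E'']
variable {M M' M'' : Type*} [TopologicalSpace M] [ChartedSpace E M]
  [TopologicalSpace M'] [ChartedSpace E' M'] [TopologicalSpace M''] [ChartedSpace E'' M'']

lemma CAnalyticAt.continuousAt {f : M → M'} {x : M} (h : CAnalyticAt E E' f x) :
    ContinuousAt f x :=
  h.1

lemma CAnalyticOn.continuousOn {f : M → M'} {s : Set M} (h : CAnalyticOn E E' f s) :
    ContinuousOn f s :=
  fun x hx => (h x hx).continuousAt.continuousWithinAt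

lemma canalyticAt_iff_of_model {f : E → M'} {x : E} :
    CAnalyticAt E E' f x ↔ ContinuousAt f x ∧ AnalyticAt ℝ (chartAt E' (f x) ∘ f) x := by
  simp [CAnalyticAt, chartAt_self_eq]

lemma canalyticAt_model_iff {f : E → E'} {x : E} : CAnalyticAt E E' f x ↔ AnalyticAt ℝ f x := by
  simp only [canalyticAt_iff_of_model, chartAt_self_eq, OpenPartialHomeomorph.refl_apply,
    CompTriple.comp_eq, and_iff_right_iff_imp]
  exact AnalyticAt.continuousAt

lemma CAnalyticAt.comp {g : M' → M''} {f : M → M'} {x : M}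
    (hg : CAnalyticAt E' E'' g (f x)) (hf : CAnalyticAt E E' f x) :
    CAnalyticAt E E'' (g ∘ f) x := by
  refine ⟨hg.continuousAt.comp hf.continuousAt, ?_⟩
  set c := chartAt E x
  set c' := chartAt E' (f x)
  have hcx : c.symm (c x) = x := c.left_inv (mem_chart_source E x)
  have hg' : AnalyticAt ℝ (chartAt E'' (g (f x)) ∘ g ∘ c'.symm) ((c' ∘ f ∘ c.symm) (c x)) := by
    simpa [hcx] using hg.2
  -- near `c x`, the intermediate point stays in the source of `c'`, where `c'.symm ∘ c' = id`
  have hsource : ∀ᶠ y in 𝓝 (c x), f (c.symm y) ∈ c'.source := by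
    have hcont : ContinuousAt (f ∘ c.symm) (c x) :=
      (hcx ▸ hf.continuousAt).comp (c.continuousAt_symm (mem_chart_target E x))
    refine hcont.preimage_mem_nhds (c'.open_source.mem_nhds ?_)
    simpa only [Function.comp_apply, hcx] using mem_chart_source E' (f x)
  refine (hg'.comp hf.2).congr ?_
  filter_upwards [hsource] with y hy
  simp [c'.left_inv hy]

lemma CAnalyticAt.congr_of_eventuallyEq {f g : E → M'} {x : E} (hf : CAnalyticAt E E' f x)
    (hfg : f =ᶠ[𝓝 x] g) : CAnalyticAt E E' g x := by
  rw [canalyticAt_iff_of_model] at hf ⊢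
  rw [← hfg.eq_of_nhds]
  exact ⟨hf.1.congr hfg, hf.2.congr (hfg.fun_comp _)⟩

lemma CAnalyticAt.mdifferentiableAt {f : M → M'} {x : M} (h : CAnalyticAt E E' f x) :
    MDifferentiableAt 𝓘(ℝ, E) 𝓘(ℝ, E') f x := by
  rw [mdifferentiableAt_iff]
  refine ⟨h.continuousAt, ?_⟩
  simpa [writtenInExtChartAt, Function.comp_def] using
    h.2.differentiableAt.differentiableWithinAt

lemma CAnalyticAt.eventuallyEq_of_mem_closure [T2Space M'] [CompleteSpace E'] {f g : E → M'}
    {u : E} (hf : CAnalyticAt E E' f u) (hg : CAnalyticAt E E' g u)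
    (hu : u ∈ closure {w | f =ᶠ[𝓝 w] g}) : f =ᶠ[𝓝 u] g := by
  set S := {w | f =ᶠ[𝓝 w] g}
  have hfg : f u = g u := by
    have : (𝓝[S] u).NeBot := mem_closure_iff_nhdsWithin_neBot.1 hu
    exact tendsto_nhds_unique_of_eventuallyEq (l := 𝓝[S] u)
      (hf.continuousAt.mono_left nhdsWithin_le_nhds) (hg.continuousAt.mono_left nhdsWithin_le_nhds)
      (eventually_nhdsWithin_of_forall fun w (hw : f =ᶠ[𝓝 w] g) => hw.eq_of_nhds)
  set c := chartAt E' (f u)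
  have hF := (canalyticAt_iff_of_model.1 hf).2
  have hG : AnalyticAt ℝ (c ∘ g) u := by
    simpa only [c, hfg] using (canalyticAt_iff_of_model.1 hg).2
  have hsrc : ∀ h : E → M', ContinuousAt h u → h u = f u → ∀ᶠ y in 𝓝 u, h y ∈ c.source :=
    fun h hc hh => hc.preimage_mem_nhds (c.open_source.mem_nhds (hh ▸ mem_chart_source E' _))
  obtain ⟨ε, hε, hball⟩ := Metric.eventually_nhds_iff_ball.1
    (hF.eventually_analyticAt.and <| hG.eventually_analyticAt.and <|
      (hsrc f hf.continuousAt rfl).and (hsrc g hg.continuousAt hfg.symm))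
  obtain ⟨w, hw, hwS⟩ := mem_closure_iff.1 hu _ Metric.isOpen_ball (Metric.mem_ball_self hε)
  have hcfg : EqOn (c ∘ f) (c ∘ g) (Metric.ball u ε) :=
    AnalyticOnNhd.eqOn_of_preconnected_of_eventuallyEq (fun y hy => (hball y hy).1)
      (fun y hy => (hball y hy).2.1) (convex_ball u ε).isPreconnected hw (hwS.fun_comp c)
  filter_upwards [Metric.ball_mem_nhds u hε] with y hy
  exact c.injOn (hball y hy).2.2.1 (hball y hy).2.2.2 (hcfg hy)

lemma CAnalyticOn.eqOn_of_preconnected_of_eventuallyEq [T2Space M'] [CompleteSpace E']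
    {f g : E → M'} {s : Set E} (hf : CAnalyticOn E E' f s) (hg : CAnalyticOn E E' g s)
    (hs : IsPreconnected s) {z : E} (hz : z ∈ s) (hfg : f =ᶠ[𝓝 z] g) : EqOn f g s := by
  have hsub : s ⊆ {w | f =ᶠ[𝓝 w] g} :=
    hs.subset_of_closure_inter_subset isOpen_setOfPred_eventually_nhds ⟨z, hz, hfg⟩
      fun u ⟨hu, hus⟩ => (hf u hus).eventuallyEq_of_mem_closure (hg u hus) hu
  exact fun u hu => (hsub hu).eq_of_nhds

lemma eqOn_comp_of_eventuallyEq [CompleteSpace E'] [T2Space M'] {φ : E → M'} {g : M' → M'}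
    (L : E →L[ℝ] E) {B : Set E} (hB : Convex ℝ B) (h0 : 0 ∈ B) (hφ : CAnalyticOn E E' φ B)
    (hg : CAnalytic E' E' g) (hgerm : ∀ᶠ u in 𝓝 0, φ (L u) = g (φ u)) :
    EqOn (φ ∘ L) (g ∘ φ) (B ∩ L ⁻¹' B) :=
  CAnalyticOn.eqOn_of_preconnected_of_eventuallyEq
    (fun x hx => (hφ _ hx.2).comp (canalyticAt_model_iff.2 (L.analyticAt x)))
    (fun x hx => (hg _).comp (hφ x hx.1))
    (hB.inter (hB.linear_preimage L.toLinearMap)).isPreconnected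
    ⟨h0, by simpa using h0⟩ hgerm

end ChartAnalytic

section AnaDiffeo

variable {E E' E'' : Type*} [NormedAddCommGroup E] [NormedSpace ℝ E]
  [NormedAddCommGroup E'] [NormedSpace ℝ E'] [NormedAddCommGroup E''] [NormedSpace ℝ E'']
variable {M M' M'' : Type*} [TopologicalSpace M] [ChartedSpace E M]
  [TopologicalSpace M'] [ChartedSpace E' M'] [TopologicalSpace M''] [ChartedSpace E'' M'']

variable (E E') in
def AnaDiffeoOn (f : M → M') (U : Set M) : Prop :=
  IsOpen U ∧ InjOn f U ∧ IsOpen (f '' U) ∧ CAnalyticOn E E' f U ∧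
    ∃ g : M' → M, LeftInvOn g f U ∧ CAnalyticOn E' E g (f '' U)

lemma localAnaDiffeoOn_iff {f : M → M'} {s : Set M} :
    LocalAnaDiffeoOn E E' f s ↔ ∀ x ∈ s, ∃ U, x ∈ U ∧ U ⊆ s ∧ AnaDiffeoOn E E' f U := by
  refine forall₂_congr fun x _ => exists_congr fun U => ?_
  simp only [AnaDiffeoOn]
  tauto

lemma AnaDiffeoOn.canalyticOn {f : M → M'} {U : Set M} (h : AnaDiffeoOn E E' f U) :
    CAnalyticOn E E' f U :=
  h.2.2.2.1

lemma AnaDiffeoOn.isOpen_image {f : M → M'} {U V : Set M} (h : AnaDiffeoOn E E' f U)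
    (hV : IsOpen V) (hVU : V ⊆ U) : IsOpen (f '' V) := by
  obtain ⟨-, -, hfU, -, g, hgf, hg⟩ := h
  have : f '' V = f '' U ∩ g ⁻¹' V := by
    ext y
    constructor
    · rintro ⟨x, hx, rfl⟩
      exact ⟨mem_image_of_mem f (hVU hx), by rwa [mem_preimage, hgf (hVU hx)]⟩
    · rintro ⟨⟨x, hx, rfl⟩, hy⟩
      exact ⟨x, by rwa [mem_preimage, hgf hx] at hy, rfl⟩
  rw [this]
  exact hg.continuousOn.isOpen_inter_preimage hfU hV

lemma AnaDiffeoOn.mono {f : M → M'} {U V : Set M} (h : AnaDiffeoOn E E' f U) (hV : IsOpen V)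
    (hVU : V ⊆ U) : AnaDiffeoOn E E' f V := by
  obtain ⟨-, hinj, -, hf, g, hgf, hg⟩ := id h
  exact ⟨hV, hinj.mono hVU, h.isOpen_image hV hVU, fun x hx => hf x (hVU hx), g, hgf.mono hVU,
    fun y hy => hg y (image_mono hVU hy)⟩

lemma AnaDiffeoOn.comp {g : M' → M''} {f : M → M'} {U : Set M} {W : Set M'}
    (hg : AnaDiffeoOn E' E'' g W) (hf : AnaDiffeoOn E E' f U) (hfUW : MapsTo f U W) :
    AnaDiffeoOn E E'' (g ∘ f) U := by
  obtain ⟨hU, hfinj, hfU, hfan, f', hf'f, hf'an⟩ := hf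
  obtain ⟨-, hginj, -, hgan, g', hg'g, hg'an⟩ := id hg
  refine ⟨hU, hginj.comp hfinj hfUW, ?_, fun x hx => (hgan _ (hfUW hx)).comp (hfan x hx),
    f' ∘ g', hf'f.comp hg'g hfUW, ?_⟩
  · rw [image_comp]
    exact hg.isOpen_image hfU hfUW.image_subset
  · rintro _ ⟨x, hx, rfl⟩
    have hfx : g' (g (f x)) = f x := hg'g (hfUW hx)
    exact (hfx ▸ hf'an (f x) (mem_image_of_mem f hx)).comp
      (hg'an _ (mem_image_of_mem g (hfUW hx)))

lemma AnaDiffeoOn.congr {f g : E → M'} {U : Set E} (h : AnaDiffeoOn E E' f U)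
    (hfg : EqOn f g U) : AnaDiffeoOn E E' g U := by
  obtain ⟨hU, hinj, hfU, hf, f', hf'f, hf'⟩ := h
  rw [hfg.image_eq] at hfU hf'
  exact ⟨hU, hinj.congr hfg, hfU, fun x hx => (hf x hx).congr_of_eventuallyEq
    (eventually_of_mem (hU.mem_nhds hx) hfg), f', fun x hx => hfg hx ▸ hf'f hx, hf'⟩

lemma anaDiffeoOn_of_inverse {f : M → M'} {g : M' → M} (hf : CAnalytic E E' f)
    (hg : CAnalytic E' E g) (hgf : LeftInverse g f) (hfg : RightInverse g f) {U : Set M}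
    (hU : IsOpen U) : AnaDiffeoOn E E' f U := by
  have himage : f '' U = g ⁻¹' U := by rw [image_eq_preimage_of_inverse hgf hfg]
  refine ⟨hU, hgf.injective.injOn, ?_, fun x _ => hf x, g, fun x _ => hgf x, fun y _ => hg y⟩
  rw [himage]
  exact hU.preimage (continuous_iff_continuousAt.2 fun y => (hg y).continuousAt)

lemma LocalAnaDiffeoOn.canalyticOn {f : M → M'} {s : Set M} (h : LocalAnaDiffeoOn E E' f s) :
    CAnalyticOn E E' f s := fun x hx => by
  obtain ⟨U, hxU, -, hU⟩ := localAnaDiffeoOn_iff.1 h x hx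
  exact hU.canalyticOn x hxU

lemma LocalAnaDiffeoOn.congr {f g : E → M'} {s : Set E} (h : LocalAnaDiffeoOn E E' f s)
    (hfg : EqOn f g s) : LocalAnaDiffeoOn E E' g s := by
  rw [localAnaDiffeoOn_iff] at h ⊢
  intro x hx
  obtain ⟨U, hxU, hUs, hU⟩ := h x hx
  exact ⟨U, hxU, hUs, hU.congr (hfg.mono hUs)⟩

lemma localAnaDiffeoOn_sUnion {f : M → M'} {c : Set (Set M)}
    (h : ∀ s ∈ c, LocalAnaDiffeoOn E E' f s) : LocalAnaDiffeoOn E E' f (⋃₀ c) := by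
  rintro x ⟨s, hs, hxs⟩
  obtain ⟨U, hU, hxU, hUs, hU'⟩ := h s hs x hxs
  exact ⟨U, hU, hxU, hUs.trans (subset_sUnion_of_mem hs), hU'⟩

end AnaDiffeo

section Isotropy

variable {Γ : Type*} [Group Γ] {E : Type*} [NormedAddCommGroup E] [NormedSpace ℝ E]
variable {M : Type*} [TopologicalSpace M] [ChartedSpace E M]

def infinitesimalRep (ρ : Γ →* Equiv.Perm M) (x₀ : M) (hfix : ∀ γ, ρ γ x₀ = x₀)
    (hdiff : ∀ γ, MDifferentiableAt 𝓘(ℝ, E) 𝓘(ℝ, E) (ρ γ) x₀) : Γ →* (E →L[ℝ] E) where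
  toFun γ := mfderiv 𝓘(ℝ, E) 𝓘(ℝ, E) (ρ γ) x₀
  map_one' := by
    rw [map_one, Equiv.Perm.coe_one, mfderiv_id]
    rfl
  map_mul' a b := by
    have hda : MDifferentiableAt 𝓘(ℝ, E) 𝓘(ℝ, E) (ρ a) (ρ b x₀) := by rw [hfix b]; exact hdiff a
    rw [map_mul, Equiv.Perm.coe_mul, mfderiv_comp x₀ hda (hdiff b), hfix b]
    rfl

end Isotropy

section Extension

variable {Γ : Type*} [Group Γ] {E : Type*} [NormedAddCommGroup E] [NormedSpace ℝ E] {M : Type*}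

@[simp]
lemma map_inv_apply_map_apply (R : Γ →* (E →L[ℝ] E)) (a : Γ) (u : E) : R a⁻¹ (R a u) = u := by
  rw [← mul_apply_eq_comp, ← map_mul, inv_mul_cancel, map_one, one_apply_eq_self]

open Classical in
def equivariantExtension (R : Γ →* (E →L[ℝ] E)) (ρ : Γ →* Equiv.Perm M) (φ : E → M)
    (B : Set E) (u : E) : M :=
  if h : ∃ a, R a u ∈ B then ρ h.choose⁻¹ (φ (R h.choose u)) else φ u

lemma equivariantExtension_eq {R : Γ →* (E →L[ℝ] E)} {ρ : Γ →* Equiv.Perm M} {φ : E → M}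
    {B : Set E} (hB : ∀ δ, ∀ w ∈ B, R δ w ∈ B → φ (R δ w) = ρ δ (φ w)) {u : E} {a : Γ}
    (ha : R a u ∈ B) : equivariantExtension R ρ φ B u = ρ a⁻¹ (φ (R a u)) := by
  have hex : ∃ b, R b u ∈ B := ⟨a, ha⟩
  have hab : R (a * hex.choose⁻¹) (R hex.choose u) = R a u := by simp
  rw [equivariantExtension, dif_pos hex, ← hab, hB _ _ hex.choose_spec (hab ▸ ha)]
  simp

end Extension

section GoodExt

variable {n : ℕ} {Γ : Type*} [Group Γ] {M : Type*} [TopologicalSpace M] [T2Space M]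
  [ChartedSpace (V n) M]

lemma goodExt_equivariantExtension {ρ : Γ →* Equiv.Perm M} (hρ : ∀ γ, CAnalytic (V n) (V n) (ρ γ))
    (R : Γ →* (V n →L[ℝ] V n)) {φ : V n → M} {B : Set (V n)} (hBo : IsOpen B)
    (hBc : Convex ℝ B) (hB0 : 0 ∈ B) (hφ : AnaDiffeoOn (V n) (V n) φ B)
    (hconj : ∀ γ, ∀ᶠ u in 𝓝 (0 : V n), φ (R γ u) = ρ γ (φ u)) :
    GoodExt (fun γ => ⇑(R γ)) (fun γ => ⇑(ρ γ)) φ (⋃ a, R a ⁻¹' B)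
      (equivariantExtension R ρ φ B) := by
  have hB δ w (hw : w ∈ B) (hδw : R δ w ∈ B) : φ (R δ w) = ρ δ (φ w) :=
    eqOn_comp_of_eventuallyEq (R δ) hBc hB0 hφ.canalyticOn (hρ δ) (hconj δ) ⟨hw, hδw⟩
  have hext {u a} (ha : R a u ∈ B) := equivariantExtension_eq hB ha
  have hR0 a : (0 : V n) ∈ R a ⁻¹' B := by simpa using hB0
  have hRi a b u : R (a * b⁻¹) (R b u) = R a u := by simp
  refine ⟨isOpen_iUnion fun a => hBo.preimage (R a).continuous,
    ⟨⟨0, mem_iUnion.2 ⟨1, hR0 1⟩⟩, isPreconnected_iUnion ⟨0, mem_iInter.2 hR0⟩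
      fun a => (hBc.linear_preimage (R a).toLinearMap).isPreconnected⟩,
    mem_iUnion.2 ⟨1, hR0 1⟩, ?_, ?_, ?_, ?_⟩
  · simp only [mem_iUnion, mem_preimage]
    rintro γ u ⟨a, ha⟩
    exact ⟨a * γ⁻¹, by rwa [hRi]⟩
  · filter_upwards [hBo.mem_nhds hB0] with u hu
    simpa using hext (a := 1) (by simpa using hu)
  · rw [localAnaDiffeoOn_iff]
    simp only [mem_iUnion, mem_preimage]
    rintro u ⟨a, ha⟩
    have hRa : AnaDiffeoOn (V n) (V n) (R a) (R a ⁻¹' B) :=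
      anaDiffeoOn_of_inverse (fun x => canalyticAt_model_iff.2 ((R a).analyticAt x))
        (fun x => canalyticAt_model_iff.2 ((R a⁻¹).analyticAt x))
        (map_inv_apply_map_apply R a) fun u => by simpa using map_inv_apply_map_apply R a⁻¹ u
        (hBo.preimage (R a).continuous)
    have hρa : AnaDiffeoOn (V n) (V n) (ρ a⁻¹) univ :=
      anaDiffeoOn_of_inverse (hρ a⁻¹) (hρ a) (fun x => by simp) (fun x => by simp) isOpen_univ
    refine ⟨R a ⁻¹' B, ha, fun x hx => mem_iUnion.2 ⟨a, hx⟩, ?_⟩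
    exact ((hρa.comp hφ (mapsTo_univ _ _)).comp hRa fun x hx => hx).congr
      fun x hx => (hext hx).symm
  · simp only [mem_iUnion, mem_preimage]
    rintro γ u ⟨a, ha⟩
    rw [hext (a := a * γ⁻¹) (by rwa [hRi]), hext ha, hRi]
    simp

end GoodExt

section Maximal

variable {n : ℕ} {Γ : Type*} {M : Type*} [TopologicalSpace M] [T2Space M] [ChartedSpace (V n) M]
variable {r : Γ → V n → V n} {ρ : Γ → M → M} {φ : V n → M}

lemma GoodExt.eqOn_of_subset {ℳ ℳ' : Set (V n)} {Φ Φ' : V n → M} (h : GoodExt r ρ φ ℳ Φ)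
    (h' : GoodExt r ρ φ ℳ' Φ') (hsub : ℳ ⊆ ℳ') : EqOn Φ Φ' ℳ := by
  obtain ⟨-, hc, h0, -, hev, hloc, -⟩ := h
  obtain ⟨-, -, -, -, hev', hloc', -⟩ := h'
  exact CAnalyticOn.eqOn_of_preconnected_of_eventuallyEq hloc.canalyticOn
    (fun x hx => hloc'.canalyticOn x (hsub hx)) hc.isPreconnected h0
    (Filter.EventuallyEq.trans hev (Filter.EventuallyEq.symm hev'))

lemma exists_goodExt_sUnion {c : Set (Set (V n))} (hc : ∀ s ∈ c, ∃ Φ, GoodExt r ρ φ s Φ)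
    (hchain : IsChain (· ⊆ ·) c) (hne : c.Nonempty) : ∃ Φ, GoodExt r ρ φ (⋃₀ c) Φ := by
  have : Nonempty M := ⟨φ 0⟩
  choose! F hF using hc
  choose! T hT using fun u (hu : u ∈ ⋃₀ c) => mem_sUnion.1 hu
  have hglue : ∀ s ∈ c, EqOn (fun u => F (T u) u) (F s) s := by
    intro s hs u hu
    obtain ⟨hTc, huT⟩ := hT u ⟨s, hs, hu⟩
    rcases hchain.total hTc hs with h | h
    · exact (hF _ hTc).eqOn_of_subset (hF s hs) h huT
    · exact ((hF s hs).eqOn_of_subset (hF _ hTc) h hu).symm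
  obtain ⟨s₀, hs₀⟩ := hne
  have h0 : ∀ s ∈ c, (0 : V n) ∈ s := fun s hs => (hF s hs).2.2.1
  refine ⟨fun u => F (T u) u, isOpen_sUnion fun s hs => (hF s hs).1,
    ⟨⟨0, s₀, hs₀, h0 s₀ hs₀⟩, isPreconnected_sUnion 0 c h0 fun s hs => (hF s hs).2.1.isPreconnected⟩,
    ⟨s₀, hs₀, h0 s₀ hs₀⟩, ?_, ?_, ?_, ?_⟩
  · rintro γ u ⟨s, hs, hus⟩
    obtain ⟨-, -, -, hinv, -⟩ := hF s hs
    exact ⟨s, hs, hinv γ u hus⟩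
  · obtain ⟨hs₀o, -, -, -, hev, -⟩ := hF s₀ hs₀
    filter_upwards [hev, hs₀o.mem_nhds (h0 s₀ hs₀)] with u hu hus
    exact (hglue s₀ hs₀ hus).trans hu
  · refine localAnaDiffeoOn_sUnion fun s hs => ?_
    obtain ⟨-, -, -, -, -, hloc, -⟩ := hF s hs
    exact hloc.congr (hglue s hs).symm
  · rintro γ u ⟨s, hs, hus⟩
    obtain ⟨-, -, -, hinv, -, -, hconj⟩ := hF s hs
    rw [hglue s hs (hinv γ u hus), hglue s hs hus]
    exact hconj γ u hus

lemma exists_maximal_goodExt {ℳ₀ : Set (V n)} {Φ₀ : V n → M} (h₀ : GoodExt r ρ φ ℳ₀ Φ₀) :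
    ∃ (ℳ : Set (V n)) (Φ : V n → M), GoodExt r ρ φ ℳ Φ ∧
      ∀ (ℳ' : Set (V n)) (Φ' : V n → M), GoodExt r ρ φ ℳ' Φ' → ℳ ⊆ ℳ' → ℳ' = ℳ := by
  obtain ⟨ℳ, -, ⟨Φ, hΦ⟩, hmax⟩ := zorn_subset_nonempty {s | ∃ Φ, GoodExt r ρ φ s Φ}
    (fun c hc hchain hne => ⟨⋃₀ c, exists_goodExt_sUnion hc hchain hne,
      fun _ => subset_sUnion_of_mem⟩) ℳ₀ ⟨Φ₀, h₀⟩
  exact ⟨ℳ, Φ, hΦ, fun ℳ' Φ' h' hsub => (hmax ⟨Φ', h'⟩ hsub).antisymm hsub⟩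

end Maximal

theorem statement_1_general (n : ℕ) (Γ : Type*) [Group Γ]
    (M : Type*) [TopologicalSpace M] [T2Space M] [ChartedSpace (V n) M]
    (ρ : Γ →* Equiv.Perm M) (hρ : ∀ γ : Γ, CAnalytic (V n) (V n) ⇑(ρ γ))
    (x₀ : M) (hfix : ∀ γ : Γ, ρ γ x₀ = x₀)
    (r : Γ → V n → V n)
    (hr : ∀ γ : Γ, r γ = fun u =>
      mfderiv (modelWithCornersSelf ℝ (V n)) (modelWithCornersSelf ℝ (V n)) (ρ γ) x₀ u)
    (φ : V n → M) (hφ : IsLocalLinearization φ x₀)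
    (hconj : ∀ γ : Γ, ∀ᶠ u in 𝓝 (0 : V n), φ (r γ u) = ρ γ (φ u)) :
    ∃ (ℳ : Set (V n)) (Φ : V n → M),
      GoodExt r (fun γ : Γ => ⇑(ρ γ)) φ ℳ Φ ∧
      ∀ (ℳ' : Set (V n)) (Φ' : V n → M),
        GoodExt r (fun γ : Γ => ⇑(ρ γ)) φ ℳ' Φ' → ℳ ⊆ ℳ' → ℳ' = ℳ := by
  set R := infinitesimalRep ρ x₀ hfix fun γ => (hρ γ x₀).mdifferentiableAt
  obtain rfl : r = fun γ => ⇑(R γ) := funext hr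
  obtain ⟨-, U, hUo, hU0, hφU⟩ := hφ
  obtain ⟨ε, hε, hBU⟩ := Metric.isOpen_iff.1 hUo 0 hU0
  exact exists_maximal_goodExt <| goodExt_equivariantExtension hρ R Metric.isOpen_ball
    (convex_ball 0 ε) (Metric.mem_ball_self hε)
    ((show AnaDiffeoOn (V n) (V n) φ U from ⟨hUo, hφU⟩).mono Metric.isOpen_ball hBU) hconj

/-- Let `Γ` act real-analytically on a real analytic manifold `M` with a
fixed point `x₀`, with infinitesimal representation `r` at `x₀`, and suppose the action is
analytically linearizable at `x₀` via `φ`. Then there is a maximal connected `r`-invariant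
open set `ℳ ∋ 0` to which `φ` extends as an analytic local diffeomorphism `Φ`
semi-conjugating `r` to `ρ` on `ℳ`. -/
theorem statement_1 (n : ℕ) (Γ : Type*) [Group Γ]
    (M : Type*) [TopologicalSpace M] [T2Space M] [ChartedSpace (V n) M]
    (hM : AnalyticCharts (V n) M)
    (ρ : Γ →* Equiv.Perm M) (hρ : ∀ γ : Γ, CAnalytic (V n) (V n) ⇑(ρ γ))
    (x₀ : M) (hfix : ∀ γ : Γ, ρ γ x₀ = x₀)
    (r : Γ → V n → V n)
    (hr : ∀ γ : Γ, r γ = fun u =>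
      mfderiv (modelWithCornersSelf ℝ (V n)) (modelWithCornersSelf ℝ (V n)) (ρ γ) x₀ u)
    (φ : V n → M) (hφ : IsLocalLinearization φ x₀)
    (hconj : ∀ γ : Γ, ∀ᶠ u in 𝓝 (0 : V n), φ (r γ u) = ρ γ (φ u)) :
    ∃ (ℳ : Set (V n)) (Φ : V n → M),
      GoodExt r (fun γ : Γ => ⇑(ρ γ)) φ ℳ Φ ∧
      ∀ (ℳ' : Set (V n)) (Φ' : V n → M),
        GoodExt r (fun γ : Γ => ⇑(ρ γ)) φ ℳ' Φ' → ℳ ⊆ ℳ' → ℳ' = ℳ :=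
  statement_1_general n Γ M ρ hρ x₀ hfix r hr φ hφ hconj
end Zeghib
end
end

section
/- Let n ≥ 3 and let Γ be a finite-index subgroup of SL(n,ℤ), acting linearly on ℝⁿ. Then every Γ-invariant open subset of ℝⁿ containing 0 is connected. -/
open Set Filter Topology MeasureTheory Matrix Function
noncomputable section
namespace Zeghib

abbrev SLR (n : ℕ) := Matrix.SpecialLinearGroup (Fin n) ℝ
abbrev SLZ (n : ℕ) := Matrix.SpecialLinearGroup (Fin n) ℤ

/-- The topology on `SL(n,ℝ)` induced from the space of matrices. -/
instance {n : ℕ} : TopologicalSpace (SLR n) :=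
  TopologicalSpace.induced (fun g => (g : Matrix (Fin n) (Fin n) ℝ)) inferInstance

/-- The linear action of `SL(n,ℝ)` on `ℝⁿ`. -/
def lact {n : ℕ} (γ : SLR n) (u : V n) : V n := (γ : Matrix (Fin n) (Fin n) ℝ).mulVec u

lemma lact_mul {n : ℕ} (A B : SLR n) (v : V n) : lact (A * B) v = lact A (lact B v) := by
  simp only [lact, Matrix.SpecialLinearGroup.coe_mul]
  rw [Matrix.mulVec_mulVec]

lemma lact_one {n : ℕ} (v : V n) : lact (1 : SLR n) v = v := by
  simp [lact]

/-- The coefficient-wise embedding `SL(n,ℤ) →* SL(n,ℝ)`. -/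
def slCast {n : ℕ} : SLZ n →* SLR n := Matrix.SpecialLinearGroup.map (Int.castRingHom ℝ)

/-- `SL(n,ℤ)` viewed as a subgroup of `SL(n,ℝ)`. -/
def SLZR (n : ℕ) : Subgroup (SLR n) := MonoidHom.range (slCast (n := n))

/-- A subgroup `Δ` of a topological group `G` is a lattice if it is discrete and the
quotient `G ⧸ Δ` carries a nonzero finite `G`-invariant (Borel) measure. -/
def IsLatticeIn (G : Type*) [Group G] [TopologicalSpace G] (Δ : Subgroup G) : Prop :=
  DiscreteTopology Δ ∧
    letI : MeasurableSpace (G ⧸ Δ) := borel _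
    ∃ μ : Measure (G ⧸ Δ), μ ≠ 0 ∧ IsFiniteMeasure μ ∧
      ∀ g : G, Measure.map (fun x => g • x) μ = μ

/-- `Γ ≤ SL(n,ℝ)` is, up to an automorphism of (the topological group) `SL(n,ℝ)`,
a finite-index subgroup of `SL(n,ℤ)`. -/
def UpToAutoFiniteIndexSLZ {n : ℕ} (Γ : Subgroup (SLR n)) : Prop :=
  ∃ σ : SLR n ≃* SLR n, Continuous σ ∧ Continuous σ.symm ∧
    Γ.map σ.toMonoidHom ≤ SLZR n ∧ ((Γ.map σ.toMonoidHom).subgroupOf (SLZR n)).FiniteIndex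

/-!
The group `Γ` contains all `m`-th powers for some `m > 0`, hence the elementary moves
`v ↦ v + k m v_j e_i` (`k ∈ ℤ`). If `v_i / v_j` is irrational, `ℤ m v_i + ℤ m v_j` is dense
in `ℝ`, so a third coordinate `v_k` can be made positive and arbitrarily small; reducing every
other coordinate modulo `m v_k` then brings `v` into any neighbourhood of `0`. Vectors with
irrational `v_i / v_j` are dense, so every connected component of `U` contains a point `y` whose
orbit meets the component of `0`; since `Γ` permutes the components of `U` and fixes `0`, `y`
lies in that component.
-/

open Matrix.SpecialLinearGroup (transvection)

lemma _root_.Subgroup.exists_pos_forall_pow_mem {G : Type*} [Group G] (H : Subgroup G)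
    [H.FiniteIndex] :
    ∃ m : ℕ, 0 < m ∧ ∀ g : G, g ^ m ∈ H :=
  ⟨H.normalCore.index, Nat.pos_of_ne_zero Subgroup.FiniteIndex.index_ne_zero,
    fun g => H.normalCore_le (H.normalCore.pow_index_mem g)⟩

lemma _root_.Matrix.SpecialLinearGroup.transvection_nsmul {ι F : Type*} [DecidableEq ι]
    [Fintype ι] [CommRing F] {i j : ι} (hij : i ≠ j) (b : F) (m : ℕ) :
    transvection hij (m • b) = transvection hij b ^ m := by
  induction m with
  | zero => simp
  | succ m ih => rw [succ_nsmul, Matrix.SpecialLinearGroup.transvection_add, ih, pow_succ]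

lemma _root_.mapsTo_connectedComponentIn_of_mapsTo {X Y : Type*} [TopologicalSpace X]
    [TopologicalSpace Y] {f : X → Y} {U : Set X} {W : Set Y} (hf : Continuous f)
    (hfU : MapsTo f U W) {x : X} (hx : x ∈ U) :
    MapsTo f (connectedComponentIn U x) (connectedComponentIn W (f x)) := fun _ hy =>
  connectedComponentIn_mono _ hfU.image_subset (hf.continuousOn.mapsTo_connectedComponentIn hx hy)

lemma _root_.dense_addSubgroupClosure_pair_of_irrational {x y : ℝ} (h : Irrational (x / y)) :
    Dense (AddSubgroup.closure {x, y} : Set ℝ) := by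
  refine (AddSubgroup.dense_or_cyclic _).resolve_right ?_
  rintro ⟨a, ha⟩
  obtain ⟨p, rfl⟩ := AddSubgroup.mem_closure_singleton.1
    (ha ▸ AddSubgroup.subset_closure (by simp) : x ∈ AddSubgroup.closure {a})
  obtain ⟨q, rfl⟩ := AddSubgroup.mem_closure_singleton.1
    (ha ▸ AddSubgroup.subset_closure (by simp) : y ∈ AddSubgroup.closure {a})
  rcases eq_or_ne a 0 with rfl | ha0
  · simp at h
  · rw [zsmul_eq_mul, zsmul_eq_mul, mul_div_mul_right _ _ ha0] at h
    exact h ⟨p / q, by push_cast; rfl⟩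

lemma _root_.exists_irrational_div_mem_of_isOpen {ι : Type*} [DecidableEq ι] {s : Set (ι → ℝ)}
    (hs : IsOpen s) {x : ι → ℝ} (hx : x ∈ s) {i j : ι} (hij : i ≠ j) :
    ∃ y ∈ s, Irrational (y i / y j) := by
  set φ : ℝ × ℝ → ι → ℝ := fun p => update (update x i p.1) j p.2
  have hφ : Continuous φ := by fun_prop
  obtain ⟨u, v, hu, hv, hxu, hxv, huv⟩ :=
    isOpen_prod_iff.1 (hs.preimage hφ) (x i) (x j) (by simpa [φ] using hx)
  obtain ⟨a, ha, hau⟩ := dense_irrational.exists_mem_open hu ⟨_, hxu⟩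
  obtain ⟨b, ⟨⟨q, rfl⟩, hb0⟩, hbv⟩ :=
    (Rat.denseRange_cast.sdiff_singleton (0 : ℝ)).exists_mem_open hv ⟨_, hxv⟩
  refine ⟨φ (a, q), huv ⟨hau, hbv⟩, ?_⟩
  simpa [φ, hij] using ha.div_ratCast (by rintro rfl; simp at hb0)

lemma continuous_lact {n : ℕ} (g : SLR n) : Continuous (lact g) :=
  continuous_const.matrix_mulVec continuous_id

lemma lact_zero {n : ℕ} (g : SLR n) : lact g 0 = 0 := Matrix.mulVec_zero _

lemma slCast_transvection {n : ℕ} {i j : Fin n} (hij : i ≠ j) (c : ℤ) :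
    slCast (transvection hij c) = transvection hij (c : ℝ) := by
  ext a b
  simp [slCast, Matrix.SpecialLinearGroup.transvection_coe, Matrix.single_apply, Matrix.one_apply]

lemma lact_slCast_transvection {n : ℕ} {i j : Fin n} (hij : i ≠ j) (c : ℤ) (v : V n) :
    lact (slCast (transvection hij c)) v = update v i (v i + c * v j) := by
  rw [lact, slCast_transvection, Matrix.SpecialLinearGroup.transvection_coe, Matrix.add_mulVec,
    Matrix.one_mulVec, Matrix.single_mulVec]
  ext k
  rcases eq_or_ne k i with rfl | hk <;> simp [*]

def orbit {n : ℕ} (Γ : Subgroup (SLZ n)) (v : V n) : Set (V n) :=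
  {w | ∃ γ ∈ Γ, lact (slCast γ) v = w}

section Orbit

variable {n : ℕ} {Γ : Subgroup (SLZ n)} {m : ℕ}

lemma mem_orbit_self (v : V n) : v ∈ orbit Γ v := ⟨1, Γ.one_mem, by simp [lact_one]⟩

lemma mem_orbit_trans {u v w : V n} (hw : w ∈ orbit Γ v) (hu : u ∈ orbit Γ w) :
    u ∈ orbit Γ v := by
  obtain ⟨γ, hγ, rfl⟩ := hw
  obtain ⟨γ', hγ', rfl⟩ := hu
  exact ⟨γ' * γ, Γ.mul_mem hγ' hγ, by rw [map_mul, lact_mul]⟩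

lemma update_add_mul_mem_orbit (hm : ∀ g : SLZ n, g ^ m ∈ Γ) {i j : Fin n} (hij : i ≠ j)
    (c : ℤ) (v : V n) : update v i (v i + (m * c : ℤ) * v j) ∈ orbit Γ v := by
  refine ⟨transvection hij (m * c), ?_, lact_slCast_transvection hij _ v⟩
  rw [← nsmul_eq_mul, Matrix.SpecialLinearGroup.transvection_nsmul]
  exact hm _

lemma exists_abs_le_update_mem_orbit (hm0 : 0 < m) (hm : ∀ g : SLZ n, g ^ m ∈ Γ) {i j : Fin n}
    (hij : i ≠ j) {v : V n} (hv : 0 < v j) :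
    ∃ r : ℝ, |r| ≤ m * v j / 2 ∧ update v i r ∈ orbit Γ v := by
  have hp : 0 < (m : ℝ) * v j := by positivity
  set r := toIcoMod hp (-(m * v j / 2)) (v i)
  have hr := toIcoMod_mem_Ico hp (-(m * v j / 2)) (v i)
  refine ⟨r, abs_le.2 ⟨hr.1, by linarith [hr.2]⟩, ?_⟩
  convert update_add_mul_mem_orbit hm hij (-toIcoDiv hp (-(m * v j / 2)) (v i)) v using 2
  have := self_sub_toIcoMod_eq_mul hp (-(m * v j / 2)) (v i)
  push_cast
  linarith

lemma exists_mem_orbit_forall_abs_le (hm0 : 0 < m) (hm : ∀ g : SLZ n, g ^ m ∈ Γ) {i : Fin n}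
    {v : V n} (hv : 0 < v i) : ∃ w ∈ orbit Γ v, ∀ j, |w j| ≤ m * v i := by
  have hvi : |v i| ≤ m * v i := by
    rw [abs_of_pos hv]; exact le_mul_of_one_le_left hv.le (by exact_mod_cast hm0)
  suffices ∀ s : Finset (Fin n), ∃ w ∈ orbit Γ v, w i = v i ∧ ∀ j ∈ s, |w j| ≤ m * v i by
    obtain ⟨w, hw, -, hs⟩ := this Finset.univ
    exact ⟨w, hw, fun j => hs j (Finset.mem_univ j)⟩
  intro s
  induction s using Finset.induction_on with
  | empty => exact ⟨v, mem_orbit_self v, rfl, by simp⟩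
  | @insert j s _ ih =>
    obtain ⟨w, hw, hwi, hs⟩ := ih
    rcases eq_or_ne j i with rfl | hji
    · exact ⟨w, hw, hwi, by simpa [hwi, hvi] using hs⟩
    obtain ⟨r, hr, hwr⟩ := exists_abs_le_update_mem_orbit hm0 hm hji (hwi ▸ hv : 0 < w i)
    rw [hwi] at hr
    refine ⟨update w j r, mem_orbit_trans hw hwr, by simp [hji.symm, hwi], ?_⟩
    intro k hk
    rcases eq_or_ne k j with rfl | hkj
    · rw [update_self]; linarith [show (0 : ℝ) ≤ m * v i by positivity]
    · rw [update_of_ne hkj]; exact hs k ((Finset.mem_insert.1 hk).resolve_left hkj)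

lemma exists_mem_orbit_pos_lt (hm0 : 0 < m) (hm : ∀ g : SLZ n, g ^ m ∈ Γ) {i j k : Fin n}
    (hki : k ≠ i) (hkj : k ≠ j) {v : V n} (hv : Irrational (v i / v j)) {ε : ℝ} (hε : 0 < ε) :
    ∃ w ∈ orbit Γ v, 0 < w k ∧ w k < ε := by
  have hirr : Irrational ((m * v i) / (m * v j)) := by
    rwa [mul_div_mul_left _ _ (by positivity)]
  obtain ⟨z, hz, hzlo, hzhi⟩ := (dense_addSubgroupClosure_pair_of_irrational hirr).exists_between
    (show -v k < -v k + ε by linarith)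
  obtain ⟨a, b, rfl⟩ := AddSubgroup.mem_closure_pair.1 hz
  have h₁ := update_add_mul_mem_orbit hm hki a v
  have h₂ := update_add_mul_mem_orbit hm hkj b (update v k (v k + (m * a : ℤ) * v i))
  refine ⟨_, mem_orbit_trans h₁ h₂, ?_⟩
  simp only [update_self, update_of_ne hkj.symm, zsmul_eq_mul, Int.cast_mul,
    Int.cast_natCast] at hzlo hzhi ⊢
  constructor <;> linarith

lemma exists_mem_orbit_mem_nhds_zero (hm0 : 0 < m) (hm : ∀ g : SLZ n, g ^ m ∈ Γ)
    {i j k : Fin n} (hki : k ≠ i) (hkj : k ≠ j) {v : V n} (hv : Irrational (v i / v j))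
    {t : Set (V n)} (ht : t ∈ 𝓝 0) : ∃ w ∈ orbit Γ v, w ∈ t := by
  obtain ⟨δ, hδ, hδt⟩ := Metric.mem_nhds_iff.1 ht
  have hmδ : 0 < δ / m := by positivity
  obtain ⟨w, hw, hwk, hwδ⟩ := exists_mem_orbit_pos_lt hm0 hm hki hkj hv hmδ
  obtain ⟨u, hu, hus⟩ := exists_mem_orbit_forall_abs_le hm0 hm hwk
  refine ⟨u, mem_orbit_trans hw hu, hδt ?_⟩
  rw [mem_ball_zero_iff, pi_norm_lt_iff hδ]
  intro l
  calc ‖u l‖ = |u l| := Real.norm_eq_abs _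
    _ ≤ m * w k := hus l
    _ < δ := by rwa [lt_div_iff₀' (by positivity)] at hwδ

end Orbit

/-- For a finite-index subgroup `Γ` of `SL(n,ℤ)`, `n ≥ 3`, every
`Γ`-invariant open subset of `ℝⁿ` containing `0` is connected. -/
theorem statement_5 (n : ℕ) (hn : 3 ≤ n) (Γ : Subgroup (SLZ n)) (hΓ : Γ.FiniteIndex)
    (U : Set (V n)) (hU : IsOpen U) (h0 : (0 : V n) ∈ U)
    (hinv : ∀ γ ∈ Γ, ∀ v ∈ U, lact (slCast γ) v ∈ U) :
    IsConnected U := by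
  obtain ⟨m, hm0, hm⟩ := Γ.exists_pos_forall_pow_mem
  let i : Fin n := ⟨0, by omega⟩
  let j : Fin n := ⟨1, by omega⟩
  let k : Fin n := ⟨2, by omega⟩
  suffices U ⊆ connectedComponentIn U 0 by
    rw [← (connectedComponentIn_subset U 0).antisymm this]
    exact isConnected_connectedComponentIn_iff.2 h0
  intro x hx
  obtain ⟨y, hyx, hy⟩ := exists_irrational_div_mem_of_isOpen hU.connectedComponentIn
    (mem_connectedComponentIn hx) (show i ≠ j by simp [i, j])
  obtain ⟨w, ⟨γ, hγ, rfl⟩, hw⟩ := exists_mem_orbit_mem_nhds_zero hm0 hm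
    (show k ≠ i by simp [i, k]) (show k ≠ j by simp [j, k]) hy
    (hU.connectedComponentIn.mem_nhds (mem_connectedComponentIn h0))
  have hy0 : y ∈ connectedComponentIn U 0 := by
    have := mapsTo_connectedComponentIn_of_mapsTo (continuous_lact (slCast γ⁻¹))
      (fun v hv => hinv _ (Γ.inv_mem hγ) v hv) h0 hw
    rwa [← lact_mul, ← map_mul, inv_mul_cancel, map_one, lact_one, lact_zero] at this
  rw [connectedComponentIn_eq hy0, ← connectedComponentIn_eq hyx]
  exact mem_connectedComponentIn hx
end Zeghib
end
end
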